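/- arXiv:2108.06936 — 5 statements merged into one kernel-verified Lean document; each statement's English description precedes it below -/
import Mathlib

section
/- σ is a k-automorphism of L of order 2 that is different from the hyperelliptic involution ι, and the fixed field of ⟨σ⟩ in L equals k(u)(y), where u = x²; moreover y² = (u − 1)(u − a₁)⋯(u − a_g), i.e., the fixed field is the function field of the curve v² = (u − 1)(u − a₁)⋯(u − a_g). -/
/-!
The automorphisms of `L` over `k` are determined by their values on `x` and `y`, which generate
`L`; hence `σ² = 1`, while `σ ≠ 1, ι` because `-x ≠ x` in characteristic `≠ 2`. Over
`F = k(x², y)` the element `x` has degree at most two and generates `L`, so every `z ∈ L` is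
`a + b x` with `a, b ∈ F`. As `σ` fixes `F` and negates `x`, `σ z = z` forces `b = 0`.
-/

open IntermediateField Polynomial

section RatFunc

variable {K L : Type*} [Field K] [Field L] [Algebra K L] [Algebra (RatFunc K) L]
  [IsScalarTower K (RatFunc K) L]

theorem RatFunc.algebraMap_mem_adjoin_algebraMap_X (r : RatFunc K) :
    algebraMap (RatFunc K) L r ∈ K⟮algebraMap (RatFunc K) L RatFunc.X⟯ := by
  have h := adjoin_map K {RatFunc.X} (IsScalarTower.toAlgHom K (RatFunc K) L)
  rw [RatFunc.adjoin_X, Set.image_singleton] at h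
  exact h ▸ (mem_map _).mpr ⟨r, mem_top, rfl⟩

theorem RatFunc.adjoin_algebraMap_X_pair_eq_top {y : L} (hy : (RatFunc K)⟮y⟯ = ⊤) :
    K⟮algebraMap (RatFunc K) L RatFunc.X, y⟯ = ⊤ := by
  set E := K⟮algebraMap (RatFunc K) L RatFunc.X, y⟯
  have hrange (r : RatFunc K) : algebraMap (RatFunc K) L r ∈ E.toSubfield :=
    adjoin_simple_le_iff.mpr (subset_adjoin K _ (Set.mem_insert _ _))
      (RatFunc.algebraMap_mem_adjoin_algebraMap_X r)
  have hle : (RatFunc K)⟮y⟯ ≤ E.toSubfield.toIntermediateField hrange :=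
    adjoin_simple_le_iff.mpr (subset_adjoin K _ (Set.mem_insert_of_mem _ rfl))
  exact eq_top_iff.mpr fun z _ ↦ hle (hy ▸ mem_top : z ∈ (RatFunc K)⟮y⟯)

end RatFunc

section Fixed

variable {K L : Type*} [Field K] [Field L] [Algebra K L]

theorem IntermediateField.mem_fixedField_zpowers_iff {φ : L ≃ₐ[K] L} {z : L} :
    z ∈ fixedField (Subgroup.zpowers φ) ↔ φ z = z := by
  rw [mem_fixedField_iff]
  refine ⟨fun h ↦ h φ (Subgroup.mem_zpowers φ), fun h ψ hψ ↦ ?_⟩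
  have hle : Subgroup.zpowers φ ≤ MulAction.stabilizer (L ≃ₐ[K] L) z := Subgroup.zpowers_le.mpr h
  exact hle hψ

theorem IntermediateField.adjoin_le_fixedField_zpowers_iff {φ : L ≃ₐ[K] L} {S : Set L} :
    adjoin K S ≤ fixedField (Subgroup.zpowers φ) ↔ ∀ s ∈ S, φ s = s := by
  simp only [adjoin_le_iff, Set.subset_def, SetLike.mem_coe, mem_fixedField_zpowers_iff]

theorem AlgEquiv.eq_one_of_adjoin_eq_top {S : Set L} (hS : adjoin K S = ⊤) {φ : L ≃ₐ[K] L}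
    (hφ : ∀ s ∈ S, φ s = s) : φ = 1 := by
  ext z
  have hz : z ∈ fixedField (Subgroup.zpowers φ) :=
    adjoin_le_fixedField_zpowers_iff.mpr hφ (hS ▸ mem_top)
  exact mem_fixedField_zpowers_iff.mp hz

theorem IntermediateField.adjoin_simple_eq_top_of_adjoin_pair_eq_top
    {F : IntermediateField K L} {x y : L} (h : K⟮x, y⟯ = ⊤) (hy : y ∈ F) : F⟮x⟯ = ⊤ := by
  rw [← restrictScalars_eq_top_iff (K := K), restrictScalars_adjoin, eq_top_iff, ← h]
  exact adjoin.mono _ _ _ <|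
    Set.insert_subset (Or.inr rfl) (Set.singleton_subset_iff.mpr (Or.inl hy))

end Fixed

theorem IntermediateField.exists_eq_add_mul_of_sq_eq {F E : Type*} [Field F] [Field E]
    [Algebra F E] {x z : E} {c : F} (hc : x ^ 2 = algebraMap F E c) (hz : z ∈ F⟮x⟯) :
    ∃ a b : F, z = algebraMap F E a + algebraMap F E b * x := by
  set q : F[X] := X ^ 2 - C c
  have hq : q.Monic := monic_X_pow_sub_C c two_ne_zero
  have hqx : aeval x q = 0 := by simp [q, hc]
  rw [← mem_toSubalgebra, adjoin_simple_toSubalgebra_of_isAlgebraic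
    (IsIntegral.isAlgebraic ⟨q, hq, by rwa [← aeval_def]⟩),
    Algebra.adjoin_singleton_eq_range_aeval] at hz
  obtain ⟨P, rfl⟩ := hz
  have hdeg : (P %ₘ q).degree ≤ 1 := by
    have h := degree_modByMonic_lt P hq
    rw [degree_X_pow_sub_C two_pos c] at h
    exact Order.le_of_lt_succ h
  refine ⟨(P %ₘ q).coeff 0, (P %ₘ q).coeff 1, ?_⟩
  change aeval x P = _
  conv_lhs => rw [← aeval_modByMonic_eq_self_of_root hqx, eq_X_add_C_of_degree_le_one hdeg]
  simp only [map_add, map_mul, aeval_C, aeval_X]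
  ring

theorem IntermediateField.fixedField_zpowers_eq_of_map_eq_neg {K L : Type*} [Field K] [Field L]
    [Algebra K L] {F : IntermediateField K L} {σ : L ≃ₐ[K] L}
    (hF : F ≤ fixedField (Subgroup.zpowers σ)) {x : L} (hσx : σ x = -x) (hx : -x ≠ x)
    (hxF : x ^ 2 ∈ F) (htop : F⟮x⟯ = ⊤) : fixedField (Subgroup.zpowers σ) = F := by
  refine le_antisymm (fun z hz ↦ ?_) hF
  obtain ⟨a, b, rfl⟩ := exists_eq_add_mul_of_sq_eq (z := z) (c := ⟨x ^ 2, hxF⟩) rfl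
    (htop ▸ mem_top)
  simp only [IntermediateField.algebraMap_apply] at hz ⊢
  have hσ (w : F) : σ w = w := mem_fixedField_zpowers_iff.mp (hF w.2)
  have hb : (b : L) * (x - -x) = 0 := by
    have h := mem_fixedField_zpowers_iff.mp hz
    simp only [map_add, map_mul, hσ, hσx] at h
    linear_combination -h
  rw [(mul_eq_zero.mp hb).resolve_right (sub_ne_zero.mpr hx.symm), zero_mul, add_zero]
  exact a.2

theorem stmt_3_general
    (k : Type*) [Field k]
    (p : ℕ) (hp2 : 2 < p) [CharP k p]
    (g : ℕ)
    (a : Fin g → k)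
    (L : Type*) [Field L] [Algebra k L] [Algebra (RatFunc k) L]
    [IsScalarTower k (RatFunc k) L]
    (x y : L) (hx : x = algebraMap (RatFunc k) L RatFunc.X)
    (hy : y ^ 2 = (x ^ 2 - 1) * ∏ i, (x ^ 2 - algebraMap k L (a i)))
    (hgen : IntermediateField.adjoin (RatFunc k) {y} = ⊤)
    (σ ι : L ≃ₐ[k] L)
    (hσx : σ x = -x) (hσy : σ y = y)
    (hιx : ι x = x) :
    orderOf σ = 2 ∧ σ ≠ ι ∧
    IntermediateField.fixedField (Subgroup.zpowers σ) =
      IntermediateField.adjoin k {x ^ 2, y} ∧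
    y ^ 2 = (x ^ 2 - 1) * ∏ i, (x ^ 2 - algebraMap k L (a i)) := by
  have hneg : -x ≠ x := by
    have hchar : ringChar L ≠ 2 := by rw [← Algebra.ringChar_eq k L, ringChar.eq k p]; omega
    rw [Ne, Ring.eq_self_iff_eq_zero_of_char_ne_two hchar, hx]
    exact (_root_.map_ne_zero _).mpr RatFunc.X_ne_zero
  have htop : adjoin k {x, y} = ⊤ := hx ▸ RatFunc.adjoin_algebraMap_X_pair_eq_top hgen
  have hσ2 : σ ^ 2 = 1 := AlgEquiv.eq_one_of_adjoin_eq_top htop <| by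
    rintro s (rfl | rfl) <;> simp [pow_two, hσx, hσy]
  have hσ1 : σ ≠ 1 := fun h ↦ hneg (by rw [← hσx, h, AlgEquiv.one_apply])
  have hσι : σ ≠ ι := fun h ↦ hneg (by rw [← hσx, h, hιx])
  set F := adjoin k {x ^ 2, y}
  have hF : F ≤ fixedField (Subgroup.zpowers σ) := adjoin_le_fixedField_zpowers_iff.mpr <| by
    rintro s (rfl | rfl) <;> simp [hσx, hσy]
  have hFx : F⟮x⟯ = ⊤ := adjoin_simple_eq_top_of_adjoin_pair_eq_top htop
    (subset_adjoin _ _ (Set.mem_insert_of_mem _ rfl))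
  exact ⟨orderOf_eq_prime hσ2 hσ1, hσι,
    fixedField_zpowers_eq_of_map_eq_neg hF hσx hneg (subset_adjoin _ _ (Set.mem_insert _ _)) hFx,
    hy⟩

/-- Let `L = k(x)(y)` be the function field of the genus-`g` hyperelliptic
curve `y² = (x² − 1)(x² − a₁)⋯(x² − a_g)`, let `σ` be the `k`-automorphism of `L` with
`σ(x) = −x`, `σ(y) = y`, and `ι` the hyperelliptic involution (`ι(x) = x`, `ι(y) = −y`).
Then `σ` is a `k`-automorphism of order 2 different from `ι`, and the fixed field of
`⟨σ⟩` in `L` equals `k(u)(y)` where `u = x²`; moreover `y² = (u − 1)(u − a₁)⋯(u − a_g)`. -/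
theorem stmt_3
    (k : Type*) [Field k] [IsAlgClosed k]
    (p : ℕ) (hp : p.Prime) (hp2 : 2 < p) [CharP k p]
    (g : ℕ) (hg : 2 ≤ g)
    (a : Fin g → k) (ha : Function.Injective a)
    (ha0 : ∀ i, a i ≠ 0) (ha1 : ∀ i, a i ≠ 1)
    (L : Type*) [Field L] [Algebra k L] [Algebra (RatFunc k) L]
    [IsScalarTower k (RatFunc k) L]
    (x y : L) (hx : x = algebraMap (RatFunc k) L RatFunc.X)
    (hy : y ^ 2 = (x ^ 2 - 1) * ∏ i, (x ^ 2 - algebraMap k L (a i)))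
    (hgen : IntermediateField.adjoin (RatFunc k) {y} = ⊤)
    (σ ι : L ≃ₐ[k] L)
    (hσx : σ x = -x) (hσy : σ y = y)
    (hιx : ι x = x) (hιy : ι y = -y) :
    orderOf σ = 2 ∧ σ ≠ ι ∧
    IntermediateField.fixedField (Subgroup.zpowers σ) =
      IntermediateField.adjoin k {x ^ 2, y} ∧
    y ^ 2 = (x ^ 2 - 1) * ∏ i, (x ^ 2 - algebraMap k L (a i)) :=
  stmt_3_general k p hp2 g a L x y hx hy hgen σ ι hσx hσy hιx
end

section
/- Every k-automorphism σ of L with σ(x) = −x satisfies σ(y) = ζ·y for some primitive fourth root of unity ζ ∈ k, and σ has order 4; in particular, no k-automorphism of L of order 2 maps x to −x. (This is the function-field statement that an order-2 automorphism of a hyperelliptic curve other than the hyperelliptic involution has no fixed points among the branch points of the hyperelliptic map.) -/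
/-! The relation `y² = x(x² − 1)∏(x² − aᵢ)` is odd in `x`, so an automorphism `σ` with
`σ x = −x` satisfies `(σ y)² = −y²`, i.e. `σ y = ζ y` with `ζ² = −1`. Hence `σ²` fixes `x`
and negates `y`, while `σ⁴` fixes both generators of `L = k(x)(y)` and is the identity. -/

lemma orderOf_eq_four {M : Type*} [Monoid M] {m : M} (h2 : m ^ 2 ≠ 1) (h4 : m ^ 4 = 1) :
    orderOf m = 4 :=
  orderOf_eq_prime_pow (p := 2) (n := 1) h2 h4

lemma isPrimitiveRoot_four_of_sq_eq_neg_one {R : Type*} [CommRing R] (hR : (-1 : R) ≠ 1)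
    {ζ : R} (hζ : ζ ^ 2 = -1) : IsPrimitiveRoot ζ 4 := by
  have h4 : ζ ^ 4 = 1 := by rw [show ζ ^ 4 = (ζ ^ 2) ^ 2 by ring, hζ]; ring
  exact orderOf_eq_four (hζ ▸ hR) h4 ▸ IsPrimitiveRoot.orderOf ζ

lemma exists_eq_algebraMap_mul_of_sq_eq {k L : Type*} [Field k] [IsAlgClosed k] [Field L]
    [Algebra k L] {u v : L} {c : k} (h : u ^ 2 = algebraMap k L c * v ^ 2) :
    ∃ ζ : k, ζ ^ 2 = c ∧ u = algebraMap k L ζ * v := by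
  obtain ⟨ζ, hζ⟩ := IsAlgClosed.exists_pow_nat_eq c two_pos
  have hfac : (u - algebraMap k L ζ * v) * (u + algebraMap k L ζ * v) = 0 := by
    have hζL : algebraMap k L ζ ^ 2 = algebraMap k L c := by rw [← map_pow, hζ]
    linear_combination h - v ^ 2 * hζL
  rcases mul_eq_zero.mp hfac with h | h
  · exact ⟨ζ, hζ, sub_eq_zero.mp h⟩
  · exact ⟨-ζ, by rw [neg_sq, hζ], by rw [map_neg]; linear_combination h⟩

lemma Transcendental.sq_sub_algebraMap_ne_zero {k L : Type*} [Field k] [Field L] [Algebra k L]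
    {x : L} (hx : Transcendental k x) (c : k) : x ^ 2 - algebraMap k L c ≠ 0 := by
  intro h
  refine Polynomial.X_pow_sub_C_ne_zero two_pos c (transcendental_iff.mp hx _ ?_)
  simpa using h

lemma AlgEquiv.eq_one_of_adjoin_eq_top_s6 {k K L : Type*} [Field k] [Field K] [Field L]
    [Algebra k L] [Algebra K L] (τ : L ≃ₐ[k] L)
    (hK : ∀ r : K, τ (algebraMap K L r) = algebraMap K L r) {s : Set L}
    (hs : IntermediateField.adjoin K s = ⊤) (hτs : ∀ z ∈ s, τ z = z) : τ = 1 := by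
  ext z
  have hz : z ∈ IntermediateField.adjoin K s := hs ▸ IntermediateField.mem_top
  change τ z = z
  induction hz using IntermediateField.adjoin_induction with
  | mem w hw => exact hτs w hw
  | algebraMap r => exact hK r
  | add u v _ _ hu hv => rw [map_add, hu, hv]
  | inv u _ hu => rw [map_inv₀, hu]
  | mul u v _ _ hu hv => rw [map_mul, hu, hv]

section RatFunc

variable {k L : Type*} [Field k] [Field L] [Algebra k L] [Algebra (RatFunc k) L]
  [IsScalarTower k (RatFunc k) L]

lemma AlgEquiv.apply_algebraMap_ratFunc (τ : L ≃ₐ[k] L)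
    (hX : τ (algebraMap (RatFunc k) L RatFunc.X) = algebraMap (RatFunc k) L RatFunc.X)
    (r : RatFunc k) : τ (algebraMap (RatFunc k) L r) = algebraMap (RatFunc k) L r := by
  let ι := IsScalarTower.toAlgHom k (RatFunc k) L
  have : (τ : L →ₐ[k] L).comp ι = ι :=
    IsLocalization.algHom_ext (nonZeroDivisors (Polynomial k)) <|
      Polynomial.algHom_ext (by simpa [ι, Algebra.algHom, RatFunc.algebraMap_X] using hX)
  exact AlgHom.congr_fun this r

lemma AlgEquiv.eq_one_of_apply_X_of_adjoin_eq_top (τ : L ≃ₐ[k] L) {y : L}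
    (hgen : IntermediateField.adjoin (RatFunc k) {y} = ⊤)
    (hX : τ (algebraMap (RatFunc k) L RatFunc.X) = algebraMap (RatFunc k) L RatFunc.X)
    (hy : τ y = y) : τ = 1 :=
  τ.eq_one_of_adjoin_eq_top_s6 (τ.apply_algebraMap_ratFunc hX) hgen (by simpa using hy)

end RatFunc

section Hyperelliptic

variable {k L ι : Type*} [Field k] [Field L] [Algebra k L] [Fintype ι] {a : ι → k} {x y : L}

lemma Transcendental.mul_sq_sub_one_mul_prod_ne_zero (hx : Transcendental k x) :
    x * (x ^ 2 - 1) * ∏ i, (x ^ 2 - algebraMap k L (a i)) ≠ 0 := by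
  refine mul_ne_zero (mul_ne_zero (fun h => hx (h ▸ isAlgebraic_zero)) ?_)
    (Finset.prod_ne_zero_iff.mpr fun i _ => hx.sq_sub_algebraMap_ne_zero (a i))
  simpa using hx.sq_sub_algebraMap_ne_zero 1

lemma AlgEquiv.apply_sq_eq_neg_of_apply_eq_neg
    (hy : y ^ 2 = x * (x ^ 2 - 1) * ∏ i, (x ^ 2 - algebraMap k L (a i)))
    (σ : L ≃ₐ[k] L) (hσ : σ x = -x) : σ y ^ 2 = -y ^ 2 := by
  rw [← map_pow, hy, map_mul, map_mul, map_prod]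
  simp only [map_sub, map_pow, map_one, AlgEquiv.commutes, hσ, neg_sq]
  ring

variable [IsAlgClosed k] [Algebra (RatFunc k) L] [IsScalarTower k (RatFunc k) L]

lemma AlgEquiv.orderOf_eq_four_of_apply_eq_neg (hk : (-1 : k) ≠ 1)
    (hx : x = algebraMap (RatFunc k) L RatFunc.X)
    (hy : y ^ 2 = x * (x ^ 2 - 1) * ∏ i, (x ^ 2 - algebraMap k L (a i)))
    (hgen : IntermediateField.adjoin (RatFunc k) {y} = ⊤) (σ : L ≃ₐ[k] L) (hσ : σ x = -x) :
    (∃ ζ : k, IsPrimitiveRoot ζ 4 ∧ σ y = algebraMap k L ζ * y) ∧ orderOf σ = 4 := by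
  have hxt : Transcendental k x :=
    hx ▸ (transcendental_algebraMap_iff (algebraMap (RatFunc k) L).injective).mpr
      RatFunc.transcendental_X
  have hy0 : y ≠ 0 := (pow_ne_zero_iff two_ne_zero).mp (hy ▸ hxt.mul_sq_sub_one_mul_prod_ne_zero)
  have hσy_sq : σ y ^ 2 = algebraMap k L (-1) * y ^ 2 := by
    rw [σ.apply_sq_eq_neg_of_apply_eq_neg hy hσ, map_neg, map_one, neg_one_mul]
  obtain ⟨ζ, hζ, hσy⟩ := exists_eq_algebraMap_mul_of_sq_eq hσy_sq
  have hσ2x : (σ ^ 2) x = x := by rw [pow_two, AlgEquiv.mul_apply, hσ, map_neg, hσ, neg_neg]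
  have hσ2y : (σ ^ 2) y = -y := by
    rw [pow_two, AlgEquiv.mul_apply, hσy, map_mul, AlgEquiv.commutes, hσy, ← mul_assoc,
      ← map_mul, ← pow_two, hζ, map_neg, map_one, neg_one_mul]
  have hσ4 : σ ^ 4 = 1 := by
    rw [show 4 = 2 * 2 from rfl, pow_mul]
    refine ((σ ^ 2) ^ 2).eq_one_of_apply_X_of_adjoin_eq_top hgen ?_ ?_
    · rw [← hx, pow_two, AlgEquiv.mul_apply, hσ2x, hσ2x]
    · rw [pow_two, AlgEquiv.mul_apply, hσ2y, map_neg, hσ2y, neg_neg]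
  have hσ2 : σ ^ 2 ≠ 1 := by
    intro h
    have hy_neg : (-1 : L) * y = 1 * y := by rw [neg_one_mul, one_mul, ← hσ2y, h]; rfl
    exact hk ((algebraMap k L).injective (by simpa using mul_right_cancel₀ hy0 hy_neg))
  exact ⟨⟨ζ, isPrimitiveRoot_four_of_sq_eq_neg_one hk hζ, hσy⟩, orderOf_eq_four hσ2 hσ4⟩

end Hyperelliptic

theorem stmt_6_general
    (k : Type*) [Field k] [IsAlgClosed k]
    (p : ℕ) (hp2 : 2 < p) [CharP k p]
    (g : ℕ)
    (a : Fin (g - 1) → k)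
    (L : Type*) [Field L] [Algebra k L] [Algebra (RatFunc k) L]
    [IsScalarTower k (RatFunc k) L]
    (x y : L) (hx : x = algebraMap (RatFunc k) L RatFunc.X)
    (hy : y ^ 2 = x * (x ^ 2 - 1) * ∏ i, (x ^ 2 - algebraMap k L (a i)))
    (hgen : IntermediateField.adjoin (RatFunc k) {y} = ⊤) :
    (∀ σ : L ≃ₐ[k] L, σ x = -x →
      (∃ ζ : k, IsPrimitiveRoot ζ 4 ∧ σ y = algebraMap k L ζ * y) ∧ orderOf σ = 4) ∧
    (∀ σ : L ≃ₐ[k] L, orderOf σ = 2 → σ x ≠ -x) := by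
  have hk : (-1 : k) ≠ 1 := haveI : Fact (2 < p) := ⟨hp2⟩; CharP.neg_one_ne_one k p
  have main (σ : L ≃ₐ[k] L) (hσ : σ x = -x) :=
    σ.orderOf_eq_four_of_apply_eq_neg hk hx hy hgen hσ
  exact ⟨main, fun σ h2 hσ => by simp [(main σ hσ).2] at h2⟩

/-- Let `L = k(x)(y)` be the function field of the genus-`g` hyperelliptic
curve `y² = x(x² − 1)(x² − a₁)⋯(x² − a_{g−1})`. Every `k`-automorphism `σ` of `L` with
`σ(x) = −x` satisfies `σ(y) = ζ·y` for some primitive fourth root of unity `ζ ∈ k`, and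
`σ` has order 4; in particular, no `k`-automorphism of `L` of order 2 maps `x` to `−x`. -/
theorem stmt_6
    (k : Type*) [Field k] [IsAlgClosed k]
    (p : ℕ) (hp : p.Prime) (hp2 : 2 < p) [CharP k p]
    (g : ℕ) (hg : 2 ≤ g)
    (a : Fin (g - 1) → k) (ha : Function.Injective a)
    (ha0 : ∀ i, a i ≠ 0) (ha1 : ∀ i, a i ≠ 1)
    (L : Type*) [Field L] [Algebra k L] [Algebra (RatFunc k) L]
    [IsScalarTower k (RatFunc k) L]
    (x y : L) (hx : x = algebraMap (RatFunc k) L RatFunc.X)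
    (hy : y ^ 2 = x * (x ^ 2 - 1) * ∏ i, (x ^ 2 - algebraMap k L (a i)))
    (hgen : IntermediateField.adjoin (RatFunc k) {y} = ⊤) :
    (∀ σ : L ≃ₐ[k] L, σ x = -x →
      (∃ ζ : k, IsPrimitiveRoot ζ 4 ∧ σ y = algebraMap k L ζ * y) ∧ orderOf σ = 4) ∧
    (∀ σ : L ≃ₐ[k] L, orderOf σ = 2 → σ x ≠ -x) :=
  stmt_6_general k p hp2 g a L x y hx hy hgen
end

section
/- The element y = y₁ + y₂ satisfies y⁴ = 4x⁴y² − 4 and generates L over k(x), i.e., L = k(x)(y); in particular T⁴ − 4x⁴T² + 4 is the minimal polynomial of y over k(x), and the genus-5 generalized Howe curve with function field L has the plane model y⁴ = 4x⁴y² − 4. -/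
/-!
Squaring `y = y₁ + y₂` gives `y² = 2x⁴ + 2y₁y₂` with `(y₁y₂)² = x⁸ - 1`, which yields the quartic
relation. Since `y₁² - y₂² = 2` is a nonzero constant, `y₁ - y₂ = 2 / y` already lies in `k(x)(y)`,
so `y₁` and `y₂` do too and `y` generates `L`. The quartic is monic of degree `[L : k(x)] = 4` and
kills `y`, so it is the minimal polynomial.
-/

open Polynomial IntermediateField

theorem add_pow_four_of_sq_eq_add_one_of_sq_eq_sub_one {R : Type*} [CommRing R] {a b c : R}
    (ha : a ^ 2 = c + 1) (hb : b ^ 2 = c - 1) :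
    (a + b) ^ 4 = 4 * c * (a + b) ^ 2 - 4 := by
  have hsq : (a + b) ^ 2 = 2 * c + 2 * (a * b) := by linear_combination ha + hb
  have hab : (a * b) ^ 2 = c ^ 2 - 1 := by rw [mul_pow, ha, hb]; ring
  linear_combination ((a + b) ^ 2 - 2 * c + 2 * (a * b)) * hsq + 4 * hab

section Adjoin

variable {K L : Type*} [Field K] [Field L] [Algebra K L]

theorem adjoin_add_eq_adjoin_pair_of_sq_sub_sq_mem_bot {a b : L} (h2 : (2 : L) ≠ 0)
    (hmem : a ^ 2 - b ^ 2 ∈ (⊥ : IntermediateField K L)) (hne : a ^ 2 - b ^ 2 ≠ 0) :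
    K⟮a + b⟯ = K⟮a, b⟯ := by
  refine le_antisymm (adjoin_simple_le_iff.mpr (add_mem (subset_adjoin K _ (by simp))
    (subset_adjoin K _ (by simp)))) ?_
  set F := K⟮a + b⟯
  have hsum : a + b ∈ F := mem_adjoin_simple_self K _
  have hdiff : a - b ∈ F := by
    have hsum0 : a + b ≠ 0 := by rintro h; exact hne (by linear_combination (a - b) * h)
    have : a - b = (a ^ 2 - b ^ 2) / (a + b) := by field_simp; ring
    exact this ▸ div_mem (bot_le (a := F) hmem) hsum
  have h2F : (2 : L) ∈ F := ofNat_mem F 2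
  have ha : a = ((a + b) + (a - b)) / 2 := by field_simp; ring
  have hb : b = ((a + b) - (a - b)) / 2 := by field_simp; ring
  rw [adjoin_le_iff]
  rintro z (rfl | rfl)
  · exact ha ▸ div_mem (add_mem hsum hdiff) h2F
  · exact hb ▸ div_mem (sub_mem hsum hdiff) h2F

theorem minpoly_eq_of_adjoin_simple_eq_top {x : L} {q : K[X]} (hx : K⟮x⟯ = ⊤) (hq : q.Monic)
    (hqx : aeval x q = 0) (hdeg : q.natDegree ≤ Module.finrank K L) : minpoly K x = q := by
  have hint : IsIntegral K x := ⟨q, hq, hqx⟩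
  have hminpoly : (minpoly K x).natDegree = Module.finrank K L := by
    rw [← adjoin.finrank hint, hx, finrank_top']
  refine eq_of_monic_of_associated (minpoly.monic hint) hq ?_
  exact associated_of_dvd_of_natDegree_le (minpoly.dvd K x hqx) hq.ne_zero (hminpoly ▸ hdeg)

end Adjoin

theorem stmt_10_general
    (k : Type*) [Field k]
    (p : ℕ) (hp2 : 2 < p) [CharP k p]
    (L : Type*) [Field L] [Algebra (RatFunc k) L]
    (x y₁ y₂ : L) (hx : x = algebraMap (RatFunc k) L RatFunc.X)
    (hy₁ : y₁ ^ 2 = x ^ 4 + 1) (hy₂ : y₂ ^ 2 = x ^ 4 - 1)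
    (hgen : IntermediateField.adjoin (RatFunc k) {y₁, y₂} = ⊤)
    (hdeg : Module.finrank (RatFunc k) L = 4) :
    (y₁ + y₂) ^ 4 = 4 * x ^ 4 * (y₁ + y₂) ^ 2 - 4 ∧
    IntermediateField.adjoin (RatFunc k) {y₁ + y₂} = ⊤ ∧
    minpoly (RatFunc k) (y₁ + y₂) =
      Polynomial.X ^ 4 - Polynomial.C (4 * RatFunc.X ^ 4) * Polynomial.X ^ 2 +
        Polynomial.C 4 := by
  have : CharP L p := charP_of_injective_algebraMap (algebraMap (RatFunc k) L).injective p
  have h2 : (2 : L) ≠ 0 := Ring.two_ne_zero (by rw [ringChar.eq L p]; omega)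
  have hquartic := add_pow_four_of_sq_eq_add_one_of_sq_eq_sub_one hy₁ hy₂
  have hsq_sub : y₁ ^ 2 - y₂ ^ 2 = 2 := by rw [hy₁, hy₂]; ring
  have hgen' : (RatFunc k)⟮y₁ + y₂⟯ = ⊤ :=
    (adjoin_add_eq_adjoin_pair_of_sq_sub_sq_mem_bot h2 (hsq_sub ▸ ofNat_mem _ 2)
      (hsq_sub ▸ h2)).trans hgen
  refine ⟨hquartic, hgen', minpoly_eq_of_adjoin_simple_eq_top hgen' (by monicity!) ?_ ?_⟩
  · simp only [map_add, map_sub, map_mul, map_pow, aeval_X, aeval_C, map_ofNat, ← hx]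
    linear_combination hquartic
  · rw [hdeg]; compute_degree!

/-- Let `L = k(x)(y₁, y₂)` with `y₁² = x⁴ + 1` and `y₂² = x⁴ − 1`, a
degree-4 Galois extension of `k(x)` with group `ℤ/2ℤ × ℤ/2ℤ`. The element `y = y₁ + y₂`
satisfies `y⁴ = 4x⁴y² − 4` and generates `L` over `k(x)`, i.e. `L = k(x)(y)`; in
particular `T⁴ − 4x⁴T² + 4` is the minimal polynomial of `y` over `k(x)`. -/
theorem stmt_10
    (k : Type*) [Field k] [IsAlgClosed k]
    (p : ℕ) (hp : p.Prime) (hp2 : 2 < p) [CharP k p]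
    (L : Type*) [Field L] [Algebra (RatFunc k) L]
    (x y₁ y₂ : L) (hx : x = algebraMap (RatFunc k) L RatFunc.X)
    (hy₁ : y₁ ^ 2 = x ^ 4 + 1) (hy₂ : y₂ ^ 2 = x ^ 4 - 1)
    (hgen : IntermediateField.adjoin (RatFunc k) {y₁, y₂} = ⊤)
    (hGal : IsGalois (RatFunc k) L) (hdeg : Module.finrank (RatFunc k) L = 4)
    (hKlein : Nonempty ((L ≃ₐ[RatFunc k] L) ≃* (ZMod 2 × ZMod 2))) :
    (y₁ + y₂) ^ 4 = 4 * x ^ 4 * (y₁ + y₂) ^ 2 - 4 ∧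
    IntermediateField.adjoin (RatFunc k) {y₁ + y₂} = ⊤ ∧
    minpoly (RatFunc k) (y₁ + y₂) =
      Polynomial.X ^ 4 - Polynomial.C (4 * RatFunc.X ^ 4) * Polynomial.X ^ 2 +
        Polynomial.C 4 :=
  stmt_10_general k p hp2 L x y₁ y₂ hx hy₁ hy₂ hgen hdeg
end

section
/- The element t = y₂/y₁ satisfies t² = x, and L = k(t)(y₁) with y₁² = t¹⁰ + 1; in particular k(t) ⊂ L is a rational function field over k with [L : k(t)] = 2, so the genus-4 generalized Howe curve with function field L is hyperelliptic, with hyperelliptic model z² = t¹⁰ + 1. -/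
/-!
Since `y₂² = x (x⁵ + 1) = x y₁²`, the element `t = y₂ / y₁` is a square root of `x`. Hence
`k(t)` contains `k(x)`, and `L = k(x)(y₁, y₂) = k(t, y₁)` because `y₂ = t y₁`. As `x` is not a
square in `k(x)` (it has odd degree), `[k(t) : k(x)] = 2`, and the tower law with `[L : k(x)] = 4`
gives `[L : k(t)] = 2`.
-/

open IntermediateField Polynomial

namespace IntermediateField

variable {K F L : Type*} [Field K] [Field F] [Field L] [Algebra F L]

theorem finrank_adjoin_simple_eq_two_of_sq_eq {a : F} (ha : ¬ IsSquare a) {t : L}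
    (ht : t ^ 2 = algebraMap F L a) : Module.finrank F F⟮t⟯ = 2 := by
  have hirr : Irreducible (X ^ 2 - C a) :=
    X_pow_sub_C_irreducible_of_prime Nat.prime_two fun b hb => ha ⟨b, by rw [← hb, sq]⟩
  have hroot : aeval t (X ^ 2 - C a) = 0 := by simp [ht]
  have hmonic : (X ^ 2 - C a).Monic := monic_X_pow_sub_C a two_ne_zero
  have hint : IsIntegral F t := ⟨_, hmonic, by simpa [aeval_def] using hroot⟩
  rw [adjoin.finrank hint, ← minpoly.eq_of_irreducible_of_monic hirr hroot hmonic,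
    natDegree_X_pow_sub_C]

variable [Algebra K F] [Algebra K L] [IsScalarTower K F L]

theorem restrictScalars_adjoin_le {S : IntermediateField K L}
    (hF : ∀ f : F, algebraMap F L f ∈ S) {T : Set L} (hT : T ⊆ S) :
    (adjoin F T).restrictScalars K ≤ S :=
  adjoin_le_iff (T := S.toSubfield.toIntermediateField hF) |>.2 hT

end IntermediateField

namespace RatFunc

variable {k L : Type*} [Field k] [Field L] [Algebra k L] [Algebra (RatFunc k) L]
  [IsScalarTower k (RatFunc k) L]

theorem not_isSquare_X : ¬ IsSquare (X : RatFunc k) := by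
  rintro ⟨f, hf⟩
  have hf0 : f ≠ 0 := by rintro rfl; exact X_ne_zero (by simpa using hf)
  have := intDegree_mul hf0 hf0
  rw [← hf, intDegree_X] at this
  omega

theorem algebraMap_mem_adjoin_X (f : RatFunc k) :
    algebraMap (RatFunc k) L f ∈ k⟮algebraMap (RatFunc k) L X⟯ := by
  let φ := IsScalarTower.toAlgHom k (RatFunc k) L
  have : (⊤ : IntermediateField k (RatFunc k)).map φ = k⟮φ X⟯ := by
    rw [← adjoin_X, adjoin_map, Set.image_singleton]
  exact this ▸ (mem_map _).2 ⟨f, mem_top, rfl⟩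

end RatFunc

theorem stmt_12_general
    (k : Type*) [Field k]
    (L : Type*) [Field L] [Algebra k L] [Algebra (RatFunc k) L]
    [IsScalarTower k (RatFunc k) L]
    (x y₁ y₂ : L) (hx : x = algebraMap (RatFunc k) L RatFunc.X)
    (hy₁ : y₁ ^ 2 = x ^ 5 + 1) (hy₂ : y₂ ^ 2 = x ^ 6 + x)
    (hgen : IntermediateField.adjoin (RatFunc k) {y₁, y₂} = ⊤)
    (hdeg : Module.finrank (RatFunc k) L = 4) :
    (y₂ / y₁) ^ 2 = x ∧
    y₁ ^ 2 = (y₂ / y₁) ^ 10 + 1 ∧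
    Transcendental k (y₂ / y₁) ∧
    IntermediateField.adjoin k {y₂ / y₁, y₁} = ⊤ ∧
    Module.finrank (IntermediateField.adjoin k {y₂ / y₁}) L = 2 := by
  set t := y₂ / y₁
  have hx_tr : Transcendental k x :=
    hx ▸ (transcendental_algebraMap_iff (algebraMap (RatFunc k) L).injective).2
      RatFunc.transcendental_X
  have hy₁_ne : y₁ ≠ 0 := by
    rintro rfl
    exact hx_tr ⟨X ^ 5 + 1, fun h => by simpa using congrArg (eval 0) h, by simp [← hy₁]⟩
  have ht : t ^ 2 = x := by
    rw [div_pow, hy₂, hy₁, div_eq_iff (hy₁ ▸ pow_ne_zero 2 hy₁_ne)]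
    ring
  have hy₂_eq : y₂ = t * y₁ := (div_mul_cancel₀ y₂ hy₁_ne).symm
  have hrange : ∀ S : IntermediateField k L, t ∈ S → ∀ f, algebraMap (RatFunc k) L f ∈ S :=
    fun S htS f =>
      adjoin_simple_le_iff.2 (hx ▸ ht ▸ pow_mem htS 2) (RatFunc.algebraMap_mem_adjoin_X f)
  refine ⟨ht, by rw [show t ^ 10 = (t ^ 2) ^ 5 by ring, ht, hy₁],
    fun h => hx_tr (ht ▸ h.pow 2), ?_, ?_⟩
  · have hle : (RatFunc k)⟮y₁, y₂⟯.restrictScalars k ≤ k⟮t, y₁⟯ := by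
      refine restrictScalars_adjoin_le (hrange _ (subset_adjoin _ _ (by simp))) ?_
      simp only [Set.insert_subset_iff, Set.singleton_subset_iff, SetLike.mem_coe, hy₂_eq]
      exact ⟨subset_adjoin _ _ (by simp),
        mul_mem (subset_adjoin _ _ (by simp)) (subset_adjoin _ _ (by simp))⟩
    rwa [hgen, restrictScalars_top, top_le_iff] at hle
  · have hadjoin : k⟮t⟯ = (RatFunc k)⟮t⟯.restrictScalars k :=
      le_antisymm (adjoin_simple_le_iff.2 (mem_adjoin_simple_self (RatFunc k) t)) <|
        restrictScalars_adjoin_le (hrange _ (mem_adjoin_simple_self k t))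
          (Set.singleton_subset_iff.2 (mem_adjoin_simple_self k t))
    have hrank := Module.finrank_mul_finrank (RatFunc k) (RatFunc k)⟮t⟯ L
    rw [finrank_adjoin_simple_eq_two_of_sq_eq RatFunc.not_isSquare_X (ht.trans hx), hdeg] at hrank
    rw [hadjoin]
    change Module.finrank (RatFunc k)⟮t⟯ L = 2
    omega

/-- Let `L = k(x)(y₁, y₂)` with `y₁² = x⁵ + 1` and `y₂² = x⁶ + x`
(char `k = p ≥ 7`), a degree-4 Galois extension of `k(x)` with group `ℤ/2ℤ × ℤ/2ℤ`.
The element `t = y₂/y₁` satisfies `t² = x`, and `L = k(t)(y₁)` with `y₁² = t¹⁰ + 1`;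
in particular `k(t) ⊂ L` is a rational function field over `k` with `[L : k(t)] = 2`,
so `L` is the function field of a hyperelliptic curve with model `z² = t¹⁰ + 1`. -/
theorem stmt_12
    (k : Type*) [Field k] [IsAlgClosed k]
    (p : ℕ) (hp : p.Prime) (hp7 : 7 ≤ p) [CharP k p]
    (L : Type*) [Field L] [Algebra k L] [Algebra (RatFunc k) L]
    [IsScalarTower k (RatFunc k) L]
    (x y₁ y₂ : L) (hx : x = algebraMap (RatFunc k) L RatFunc.X)
    (hy₁ : y₁ ^ 2 = x ^ 5 + 1) (hy₂ : y₂ ^ 2 = x ^ 6 + x)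
    (hgen : IntermediateField.adjoin (RatFunc k) {y₁, y₂} = ⊤)
    (hGal : IsGalois (RatFunc k) L) (hdeg : Module.finrank (RatFunc k) L = 4)
    (hKlein : Nonempty ((L ≃ₐ[RatFunc k] L) ≃* (ZMod 2 × ZMod 2))) :
    (y₂ / y₁) ^ 2 = x ∧
    y₁ ^ 2 = (y₂ / y₁) ^ 10 + 1 ∧
    Transcendental k (y₂ / y₁) ∧
    IntermediateField.adjoin k {y₂ / y₁, y₁} = ⊤ ∧
    Module.finrank (IntermediateField.adjoin k {y₂ / y₁}) L = 2 :=
  stmt_12_general k L x y₁ y₂ hx hy₁ hy₂ hgen hdeg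
end

section
/- The element y = y₁ + y₂ generates L over k(x), i.e., L = k(x)(y), and satisfies y⁴ − 2(x⁵ + 1)(x + 1)y² + (x⁵ + 1)²(x − 1)² = 0; this quartic is the minimal polynomial of y over k(x), so the genus-4 generalized Howe curve with function field L has the plane model y⁴ − 2(x⁵+1)(x+1)y² + (x⁵+1)²(x−1)² = 0. -/
/-!
Since `(y₁ + y₂)(y₁ - y₂) = y₁² - y₂² = (x⁵ + 1)(1 - x)` is a nonzero element of `k(x)`, the
difference `y₁ - y₂`, hence `y₁` and `y₂`, lie in `k(x)(y₁ + y₂)` once `2 ≠ 0`. Squaring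
`(y₁ + y₂)² - y₁² - y₂² = 2 y₁ y₂` gives the quartic, which is monic of degree `[L : k(x)] = 4`
and therefore the minimal polynomial of the generator `y₁ + y₂`.
-/

open Polynomial IntermediateField

theorem add_pow_four_sub_add_mul_sq_add_sub_sq {R : Type*} [CommRing R] {y₁ y₂ a b : R}
    (h₁ : y₁ ^ 2 = a) (h₂ : y₂ ^ 2 = b) :
    (y₁ + y₂) ^ 4 - 2 * (a + b) * (y₁ + y₂) ^ 2 + (a - b) ^ 2 = 0 := by
  subst h₁ h₂; ring

section SumOfSquareRoots

variable {F L : Type*} [Field F] [Field L] [Algebra F L] {y₁ y₂ : L} {a b : F}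

theorem mem_adjoin_simple_add_of_sq_eq_algebraMap (h₁ : y₁ ^ 2 = algebraMap F L a)
    (h₂ : y₂ ^ 2 = algebraMap F L b) (hab : a ≠ b) (h2 : (2 : L) ≠ 0) :
    y₁ ∈ F⟮y₁ + y₂⟯ := by
  set K := F⟮y₁ + y₂⟯
  have hs : y₁ + y₂ ∈ K := mem_adjoin_simple_self F _
  have hs0 : y₁ + y₂ ≠ 0 := by
    intro h
    rw [eq_neg_of_add_eq_zero_left h, neg_sq, h₂] at h₁
    exact hab ((algebraMap F L).injective h₁).symm
  have hdiff : y₁ - y₂ = algebraMap F L (a - b) / (y₁ + y₂) := by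
    rw [eq_div_iff hs0, map_sub, ← h₁, ← h₂]; ring
  have hhalf : y₁ = ((y₁ + y₂) + (y₁ - y₂)) / 2 := by
    rw [eq_div_iff h2]; ring
  rw [hhalf, hdiff]
  exact div_mem (add_mem hs (div_mem (K.algebraMap_mem _) hs)) (ofNat_mem K 2)

theorem adjoin_simple_add_eq_adjoin_pair_of_sq_eq_algebraMap (h₁ : y₁ ^ 2 = algebraMap F L a)
    (h₂ : y₂ ^ 2 = algebraMap F L b) (hab : a ≠ b) (h2 : (2 : L) ≠ 0) :
    F⟮y₁ + y₂⟯ = F⟮y₁, y₂⟯ := by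
  have hy₁ := mem_adjoin_simple_add_of_sq_eq_algebraMap h₁ h₂ hab h2
  have hy₂ : y₂ ∈ F⟮y₁ + y₂⟯ := by
    rw [add_comm] at hy₁ ⊢
    exact mem_adjoin_simple_add_of_sq_eq_algebraMap h₂ h₁ hab.symm h2
  refine le_antisymm ?_ ?_
  · exact adjoin_simple_le_iff.mpr
      (add_mem (mem_adjoin_pair_left F y₁ y₂) (mem_adjoin_pair_right F y₁ y₂))
  · exact adjoin_le_iff.mpr (Set.insert_subset hy₁ (Set.singleton_subset_iff.mpr hy₂))

end SumOfSquareRoots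

theorem minpoly_eq_of_adjoin_simple_eq_top_s13 {F L : Type*} [Field F] [Field L] [Algebra F L]
    [FiniteDimensional F L] {y : L} (hy : F⟮y⟯ = ⊤) {q : F[X]} (hq : q.Monic)
    (hroot : aeval y q = 0) (hdeg : q.natDegree ≤ Module.finrank F L) : minpoly F y = q := by
  have hint : IsIntegral F y := .of_finite F y
  have hmin : (minpoly F y).natDegree = Module.finrank F L := by
    rw [← adjoin.finrank hint, hy, finrank_top']
  exact (eq_of_monic_of_dvd_of_natDegree_le (minpoly.monic hint) hq (minpoly.dvd F y hroot)
    (hdeg.trans hmin.ge)).symm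

theorem RatFunc.X_pow_five_add_one_ne_X_pow_six_add_X (k : Type*) [Field k] :
    (RatFunc.X ^ 5 + 1 : RatFunc k) ≠ RatFunc.X ^ 6 + RatFunc.X := by
  intro h
  have hpoly : (Polynomial.X ^ 5 + 1 : k[X]) = Polynomial.X ^ 6 + Polynomial.X := by
    apply RatFunc.algebraMap_injective k
    simpa [RatFunc.algebraMap_X] using h
  simpa [coeff_one, coeff_X] using congrArg (coeff · 6) hpoly

theorem two_ne_zero_of_charP {R : Type*} [AddMonoidWithOne R] (p : ℕ) [CharP R p] (hp : 3 ≤ p) :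
    (2 : R) ≠ 0 := by
  have : NeZero ((2 : ℕ) : R) :=
    NeZero.of_not_dvd R (p := p) (Nat.not_dvd_of_pos_of_lt two_pos hp)
  exact_mod_cast this.out

theorem stmt_13_general
    (k : Type*) [Field k]
    (p : ℕ) (hp7 : 7 ≤ p) [CharP k p]
    (L : Type*) [Field L] [Algebra (RatFunc k) L]
    (x y₁ y₂ : L) (hx : x = algebraMap (RatFunc k) L RatFunc.X)
    (hy₁ : y₁ ^ 2 = x ^ 5 + 1) (hy₂ : y₂ ^ 2 = x ^ 6 + x)
    (hgen : IntermediateField.adjoin (RatFunc k) {y₁, y₂} = ⊤)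
    (hdeg : Module.finrank (RatFunc k) L = 4) :
    IntermediateField.adjoin (RatFunc k) {y₁ + y₂} = ⊤ ∧
    (y₁ + y₂) ^ 4 - 2 * (x ^ 5 + 1) * (x + 1) * (y₁ + y₂) ^ 2 +
      (x ^ 5 + 1) ^ 2 * (x - 1) ^ 2 = 0 ∧
    minpoly (RatFunc k) (y₁ + y₂) =
      Polynomial.X ^ 4 -
        Polynomial.C (2 * (RatFunc.X ^ 5 + 1) * (RatFunc.X + 1)) * Polynomial.X ^ 2 +
        Polynomial.C ((RatFunc.X ^ 5 + 1) ^ 2 * (RatFunc.X - 1) ^ 2) := by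
  have hquartic : (y₁ + y₂) ^ 4 - 2 * (x ^ 5 + 1) * (x + 1) * (y₁ + y₂) ^ 2 +
      (x ^ 5 + 1) ^ 2 * (x - 1) ^ 2 = 0 := by
    linear_combination add_pow_four_sub_add_mul_sq_add_sub_sq hy₁ hy₂
  have : CharP L p := charP_of_injective_algebraMap (algebraMap (RatFunc k) L).injective p
  have hprim : (RatFunc k)⟮y₁ + y₂⟯ = ⊤ := by
    rw [← hgen]
    refine adjoin_simple_add_eq_adjoin_pair_of_sq_eq_algebraMap (a := RatFunc.X ^ 5 + 1)
      (b := RatFunc.X ^ 6 + RatFunc.X) ?_ ?_ (RatFunc.X_pow_five_add_one_ne_X_pow_six_add_X k)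
      (two_ne_zero_of_charP p (by omega))
    · simp [hy₁, hx]
    · simp [hy₂, hx]
  have : FiniteDimensional (RatFunc k) L := Module.finite_of_finrank_eq_succ hdeg
  refine ⟨hprim, hquartic, minpoly_eq_of_adjoin_simple_eq_top_s13 hprim (by monicity!) ?_ ?_⟩
  · simp only [map_add, map_sub, map_mul, map_pow, map_one, map_ofNat, aeval_X, aeval_C,
      ← hx]
    linear_combination hquartic
  · rw [hdeg]; compute_degree!

/-- Let `L = k(x)(y₁, y₂)` with `y₁² = x⁵ + 1` and `y₂² = x⁶ + x`
(char `k = p ≥ 7`), a degree-4 Galois extension of `k(x)` with group `ℤ/2ℤ × ℤ/2ℤ`.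
The element `y = y₁ + y₂` generates `L` over `k(x)` and satisfies
`y⁴ − 2(x⁵ + 1)(x + 1)y² + (x⁵ + 1)²(x − 1)² = 0`; this quartic is the minimal
polynomial of `y` over `k(x)`. -/
theorem stmt_13
    (k : Type*) [Field k] [IsAlgClosed k]
    (p : ℕ) (hp : p.Prime) (hp7 : 7 ≤ p) [CharP k p]
    (L : Type*) [Field L] [Algebra (RatFunc k) L]
    (x y₁ y₂ : L) (hx : x = algebraMap (RatFunc k) L RatFunc.X)
    (hy₁ : y₁ ^ 2 = x ^ 5 + 1) (hy₂ : y₂ ^ 2 = x ^ 6 + x)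
    (hgen : IntermediateField.adjoin (RatFunc k) {y₁, y₂} = ⊤)
    (hGal : IsGalois (RatFunc k) L) (hdeg : Module.finrank (RatFunc k) L = 4)
    (hKlein : Nonempty ((L ≃ₐ[RatFunc k] L) ≃* (ZMod 2 × ZMod 2))) :
    IntermediateField.adjoin (RatFunc k) {y₁ + y₂} = ⊤ ∧
    (y₁ + y₂) ^ 4 - 2 * (x ^ 5 + 1) * (x + 1) * (y₁ + y₂) ^ 2 +
      (x ^ 5 + 1) ^ 2 * (x - 1) ^ 2 = 0 ∧
    minpoly (RatFunc k) (y₁ + y₂) =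
      Polynomial.X ^ 4 -
        Polynomial.C (2 * (RatFunc.X ^ 5 + 1) * (RatFunc.X + 1)) * Polynomial.X ^ 2 +
        Polynomial.C ((RatFunc.X ^ 5 + 1) ^ 2 * (RatFunc.X - 1) ^ 2) :=
  stmt_13_general k p hp7 L x y₁ y₂ hx hy₁ hy₂ hgen hdeg
end
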